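/- With s_i and σ_j as above (t_i^2 = s_i^3, σ1 = -(s0 - s1 - 3 s2)/(2 s2), σ2 = (-3 s0 - s1 + s2)/(2 s2), σ3 = -s0/s2), the following hold: ∂σ1/∂t1 = (σ3 - σ2 + σ1 - 1)/(3 t1), ∂σ2/∂t1 = -(σ3 - σ2 + σ1 - 1)/(3 t1), and ∂σ3/∂t1 = 0. -/

import Mathlib

/-!
Implicit differentiation of `s1 ^ 3 = t ^ 2` gives `s1' = 2 s1 / (3 t1)`. Both `σ1` and `σ2` are
affine in `s1` with slopes `± 1 / (2 s2)`, `σ3` does not depend on `t1`, and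
`σ3 - σ2 + σ1 - 1 = s1 / s2`.
-/

open Filter

/-- Implicit differentiation of `f ^ p = id ^ q`, with `f x ^ (p - 1)` eliminated through the relation. -/
theorem hasDerivAt_of_eventually_pow_eq_pow {𝕜 : Type*} [NontriviallyNormedField 𝕜] [CharZero 𝕜]
    {f : 𝕜 → 𝕜} {x : 𝕜} {p q : ℕ} (hp : p ≠ 0) (hx : x ≠ 0) (hf : DifferentiableAt 𝕜 f x)
    (h : ∀ᶠ y in nhds x, f y ^ p = y ^ q) :
    HasDerivAt f (q * f x / (p * x)) x := by
  have hfx : f x ^ p = x ^ q := h.self_of_nhds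
  have hchain : (p : 𝕜) * f x ^ (p - 1) * deriv f x = q * x ^ (q - 1) :=
    (hf.hasDerivAt.pow p).unique ((hasDerivAt_pow q x).congr_of_eventuallyEq h)
  suffices hD : deriv f x = q * f x / (p * x) from hD ▸ hf.hasDerivAt
  rw [eq_div_iff (mul_ne_zero (Nat.cast_ne_zero.mpr hp) hx)]
  have hmul : (p : 𝕜) * f x ^ p * deriv f x * x = q * x ^ q * f x := by
    rw [← pow_sub_one_mul hp]
    rcases Nat.eq_zero_or_pos q with rfl | hq
    · linear_combination f x * x * hchain
    · rw [← pow_sub_one_mul hq.ne']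
      linear_combination f x * x * hchain
  rw [hfx] at hmul
  exact mul_left_cancel₀ (pow_ne_zero q hx) (by linear_combination hmul)

theorem stmt_10_general (t0 t1 t2 : ℂ) (ht1 : t1 ≠ 0)
    (s0 s1 s2 : ℂ → ℂ)
    (hs1d : DifferentiableAt ℂ s1 t1)
    (hs1 : ∀ᶠ t in nhds t1, (s1 t) ^ 3 = t ^ 2)
    (hn2 : s2 t2 ≠ 0)
    (σ1 σ2 σ3 : ℂ → ℂ)
    (hσ1 : ∀ t, σ1 t = -(s0 t0 - s1 t - 3 * s2 t2) / (2 * s2 t2))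
    (hσ2 : ∀ t, σ2 t = (-3 * s0 t0 - s1 t + s2 t2) / (2 * s2 t2))
    (hσ3 : ∀ t, σ3 t = -(s0 t0) / s2 t2) :
    deriv σ1 t1 = (σ3 t1 - σ2 t1 + σ1 t1 - 1) / (3 * t1) ∧
    deriv σ2 t1 = -(σ3 t1 - σ2 t1 + σ1 t1 - 1) / (3 * t1) ∧
    deriv σ3 t1 = 0 := by
  have hs1' : HasDerivAt s1 (2 * s1 t1 / (3 * t1)) t1 := by
    simpa using hasDerivAt_of_eventually_pow_eq_pow three_ne_zero ht1 hs1d hs1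
  have hσ1' : HasDerivAt σ1 (2 * s1 t1 / (3 * t1) / (2 * s2 t2)) t1 := by
    rw [funext hσ1]
    simpa using ((hs1'.const_sub (s0 t0)).sub_const (3 * s2 t2)).neg.div_const (2 * s2 t2)
  have hσ2' : HasDerivAt σ2 (-(2 * s1 t1 / (3 * t1)) / (2 * s2 t2)) t1 := by
    rw [funext hσ2]
    simpa using ((hs1'.const_sub (-3 * s0 t0)).add_const (s2 t2)).div_const (2 * s2 t2)
  have hcomb : σ3 t1 - σ2 t1 + σ1 t1 - 1 = s1 t1 / s2 t2 := by
    rw [hσ1, hσ2, hσ3]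
    field_simp
    ring
  refine ⟨?_, ?_, by simp [funext hσ3]⟩
  · rw [hσ1'.deriv, hcomb]
    field_simp
  · rw [hσ2'.deriv, hcomb]
    field_simp

/-- Reduced Garnier equations in `t1`:
`∂σ1/∂t1 = (σ3 - σ2 + σ1 - 1)/(3 t1)`, `∂σ2/∂t1 = -(σ3 - σ2 + σ1 - 1)/(3 t1)`,
`∂σ3/∂t1 = 0`. Here the `σ_j` are viewed as functions of `t1`. -/
theorem stmt_10 (t0 t1 t2 : ℂ) (ht0 : t0 ≠ 0) (ht1 : t1 ≠ 0) (ht2 : t2 ≠ 0)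
    (s0 s1 s2 : ℂ → ℂ)
    (hs0d : DifferentiableAt ℂ s0 t0) (hs1d : DifferentiableAt ℂ s1 t1)
    (hs2d : DifferentiableAt ℂ s2 t2)
    (hs0 : ∀ᶠ t in nhds t0, (s0 t) ^ 3 = t ^ 2)
    (hs1 : ∀ᶠ t in nhds t1, (s1 t) ^ 3 = t ^ 2)
    (hs2 : ∀ᶠ t in nhds t2, (s2 t) ^ 3 = t ^ 2)
    (hn0 : s0 t0 ≠ 0) (hn1 : s1 t1 ≠ 0) (hn2 : s2 t2 ≠ 0)
    (σ1 σ2 σ3 : ℂ → ℂ)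
    (hσ1 : ∀ t, σ1 t = -(s0 t0 - s1 t - 3 * s2 t2) / (2 * s2 t2))
    (hσ2 : ∀ t, σ2 t = (-3 * s0 t0 - s1 t + s2 t2) / (2 * s2 t2))
    (hσ3 : ∀ t, σ3 t = -(s0 t0) / s2 t2) :
    deriv σ1 t1 = (σ3 t1 - σ2 t1 + σ1 t1 - 1) / (3 * t1) ∧
    deriv σ2 t1 = -(σ3 t1 - σ2 t1 + σ1 t1 - 1) / (3 * t1) ∧
    deriv σ3 t1 = 0 :=
  stmt_10_general t0 t1 t2 ht1 s0 s1 s2 hs1d hs1 hn2 σ1 σ2 σ3 hσ1 hσ2 hσ3
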